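/- arXiv:math/0303124 — 2 statements merged into one kernel-verified Lean document; each statement's English description precedes it below -/
import Mathlib

section
/- Let N ≥ 2. Every b ∈ B_sp^+ with first entry b_1 = − is of the form ẽ_{l_1} ẽ_{l_2} ⋯ ẽ_{l_r}(−,+,…,+,−) for some r ≥ 0 and l_1,…,l_r ∈ {2,…,N}, where (−,+,…,+,−) is the sign sequence with first and last entries − and all other entries +. -/
namespace CrystalPaper

/-- A sign sequence of length `N`: `true` codes `+`, `false` codes `−`. -/
abbrev Seq (N : ℕ) := Fin N → Bool

/-- The constant sequence `(+,…,+)`. -/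
def top (N : ℕ) : Seq N := fun _ => true

/-- The constant sequence `(−,…,−)`. -/
def bot (N : ℕ) : Seq N := fun _ => false

/-- The sequence `(+^k, −^{N−k})` (first `k` entries `+`, the rest `−`). -/
def lowSeq (N k : ℕ) : Seq N := fun i => decide ((i : ℕ) < k)

/-- The number of `−` entries of a sign sequence. -/
def minusCount (N : ℕ) (b : Seq N) : ℕ :=
  (Finset.univ.filter (fun i => b i = false)).card

/-- `B_sp^+`: sign sequences with an even number of `−` entries. -/
def BspPlus (N : ℕ) (b : Seq N) : Prop := Even (minusCount N b)

/-- `B_sp^−`: sign sequences with an odd number of `−` entries. -/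
def BspMinus (N : ℕ) (b : Seq N) : Prop := Odd (minusCount N b)

/-- The type-`D_N` Kashiwara raising operator `ẽ_l`, labels `1 ≤ l ≤ N`
(`none` codes `0`).  For `1 ≤ l ≤ N−1` it replaces `(b_l, b_{l+1}) = (+,−)` by `(−,+)`;
`ẽ_N` replaces `(b_{N−1}, b_N) = (+,+)` by `(−,−)`. -/
def eD (N l : ℕ) (b : Seq N) : Option (Seq N) :=
  if h : 1 ≤ l ∧ l + 1 ≤ N then
    let i : Fin N := ⟨l - 1, by omega⟩
    let j : Fin N := ⟨l, by omega⟩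
    if b i = true ∧ b j = false then
      some (Function.update (Function.update b i false) j true)
    else none
  else if h2 : l = N ∧ 2 ≤ N then
    let i : Fin N := ⟨N - 2, by omega⟩
    let j : Fin N := ⟨N - 1, by omega⟩
    if b i = true ∧ b j = true then
      some (Function.update (Function.update b i false) j false)
    else none
  else none

/-- The type-`D_N` Kashiwara lowering operator `f̃_l`, labels `1 ≤ l ≤ N`.
For `1 ≤ l ≤ N−1` it replaces `(b_l, b_{l+1}) = (−,+)` by `(+,−)`;
`f̃_N` replaces `(b_{N−1}, b_N) = (−,−)` by `(+,+)`. -/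
def fD (N l : ℕ) (b : Seq N) : Option (Seq N) :=
  if h : 1 ≤ l ∧ l + 1 ≤ N then
    let i : Fin N := ⟨l - 1, by omega⟩
    let j : Fin N := ⟨l, by omega⟩
    if b i = false ∧ b j = true then
      some (Function.update (Function.update b i true) j false)
    else none
  else if h2 : l = N ∧ 2 ≤ N then
    let i : Fin N := ⟨N - 2, by omega⟩
    let j : Fin N := ⟨N - 1, by omega⟩
    if b i = false ∧ b j = false then
      some (Function.update (Function.update b i true) j true)
    else none
  else none

end CrystalPaper

/-!
Run the crystal backwards. If `b ≠ (−,+,…,+,−)`, then parity and `b₁ = −` force a `−` at some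
position `2 ≤ k ≤ N − 1`. Walking right from it, either some `−` at a position `≥ 2` is followed
by a `+`, and `b = ẽ_l c` for the `c` in which that `−` has moved one step right, or positions
`N − 1` and `N` are both `−`, and `b = ẽ_N c` for the `c` in which both are `+`. In both cases `c`
again lies in `B_sp^+` with `c₁ = −`, and the weight `∑_{b_k = −} (N + 1 − k)` of `c` is smaller,
so induction on this weight ends at `(−,+,…,+,−)`.
-/

theorem Nat.or_exists_not_succ_of_le {p : ℕ → Prop} {k n : ℕ} (hk : p k) (hkn : k ≤ n) :
    p n ∨ ∃ m, k ≤ m ∧ m < n ∧ p m ∧ ¬p (m + 1) := by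
  induction n, hkn using Nat.le_induction with
  | base => exact .inl hk
  | succ n hkn ih =>
    rcases ih with hn | ⟨m, hkm, hmn, hm, hm'⟩
    · by_cases hn' : p (n + 1)
      · exact .inl hn'
      · exact .inr ⟨n, hkn, n.lt_succ_self, hn, hn'⟩
    · exact .inr ⟨m, hkm, hmn.trans n.lt_succ_self, hm, hm'⟩

theorem Function.update_update_update_update_of_eq {ι α : Type*} [DecidableEq ι] {i j : ι}
    (hij : i ≠ j) {b : ι → α} {x y x' y' : α} (hx : b i = x') (hy : b j = y') :
    update (update (update (update b i x) j y) i x') j y' = b := by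
  rw [update_comm hij.symm, update_idem, update_idem, ← hx, ← hy, update_eq_self,
    update_eq_self]

theorem Fintype.sum_update_add {ι α M : Type*} [Fintype ι] [DecidableEq ι] [AddCommMonoid M]
    (f : ι → α → M) (b : ι → α) (i : ι) (v : α) :
    ∑ k, f k (Function.update b i v k) + f i (b i) = ∑ k, f k (b k) + f i v := by
  simp only [Function.apply_update f, Finset.sum_update_of_mem (Finset.mem_univ i),
    Finset.sum_eq_add_sum_sdiff_singleton_of_mem (Finset.mem_univ i) fun k => f k (b k)]
  abel

theorem Fintype.sum_update_update_add {ι α M : Type*} [Fintype ι] [DecidableEq ι]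
    [AddCommMonoid M] {i j : ι} (hij : i ≠ j) (f : ι → α → M) (b : ι → α) (x y : α) :
    ∑ k, f k (Function.update (Function.update b i x) j y k) + f i (b i) + f j (b j) =
      ∑ k, f k (b k) + f i x + f j y := by
  have hj := Fintype.sum_update_add f (Function.update b i x) j y
  rw [Function.update_of_ne hij.symm] at hj
  rw [add_right_comm, hj, add_right_comm, Fintype.sum_update_add]

theorem Relation.reflTransGen_of_exists_lt {α : Type*} {r : α → α → Prop} {P : α → Prop}
    {a : α} (μ : α → ℕ) (h : ∀ b, P b → b ≠ a → ∃ c, P c ∧ μ c < μ b ∧ r c b)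
    {b : α} (hb : P b) : ReflTransGen r a b := by
  by_cases hba : b = a
  · exact hba ▸ .refl
  · obtain ⟨c, hc, hlt, hcb⟩ := h b hb hba
    exact (reflTransGen_of_exists_lt μ h hc).tail hcb
termination_by μ b

namespace CrystalPaper

variable {N : ℕ}

theorem eD_of_lt {i : ℕ} (hi : i + 2 ≤ N) (c : Seq N)
    (hc : c ⟨i, by omega⟩ = true) (hc' : c ⟨i + 1, hi⟩ = false) :
    eD N (i + 1) c =
      some (Function.update (Function.update c ⟨i, by omega⟩ false) ⟨i + 1, hi⟩ true) := by
  rw [eD, dif_pos (by omega)]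
  simp only [Nat.add_sub_cancel]
  rw [if_pos ⟨hc, hc'⟩]

theorem eD_last (hN : 2 ≤ N) (c : Seq N)
    (hc : c ⟨N - 2, by omega⟩ = true) (hc' : c ⟨N - 1, by omega⟩ = true) :
    eD N N c = some (Function.update (Function.update c ⟨N - 2, by omega⟩ false)
      ⟨N - 1, by omega⟩ false) := by
  rw [eD, dif_neg (by omega), dif_pos ⟨rfl, hN⟩, if_pos ⟨hc, hc'⟩]

theorem minusCount_eq_sum (b : Seq N) :
    minusCount N b = ∑ k : Fin N, if b k = false then 1 else 0 :=
  Finset.card_filter _ _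

def minusWeight (N : ℕ) (b : Seq N) : ℕ := ∑ k : Fin N, if b k = false then N - k else 0

def RaisesTo (N : ℕ) (c b : Seq N) : Prop := ∃ l, 2 ≤ l ∧ l ≤ N ∧ eD N l c = some b

def firstLastMinus (N : ℕ) : Seq N := fun i => decide (0 < (i : ℕ) ∧ (i : ℕ) < N - 1)

theorem exists_raisesTo_of_minus_plus (hN : 2 ≤ N) {b : Seq N} (hb : BspPlus N b)
    (h0 : b ⟨0, zero_lt_two.trans_le hN⟩ = false) {i : ℕ} (hi : 1 ≤ i) (hiN : i + 2 ≤ N)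
    (hbi : b ⟨i, by omega⟩ = false) (hbj : b ⟨i + 1, hiN⟩ = true) :
    ∃ c, (BspPlus N c ∧ c ⟨0, zero_lt_two.trans_le hN⟩ = false) ∧
      minusWeight N c < minusWeight N b ∧ RaisesTo N c b := by
  have hij : (⟨i, by omega⟩ : Fin N) ≠ ⟨i + 1, hiN⟩ := by simp
  have hcount :=
    Fintype.sum_update_update_add hij (fun _ s => if s = false then 1 else 0) b true false
  have hweight :=
    Fintype.sum_update_update_add hij (fun k s => if s = false then N - k else 0) b true false
  simp only [hbi, hbj, ↓reduceIte, Bool.true_eq_false] at hcount hweight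
  generalize hc : Function.update (Function.update b ⟨i, _⟩ true) ⟨i + 1, hiN⟩ false = c
    at hcount hweight
  refine ⟨c, ⟨?_, ?_⟩, ?_, i + 1, by omega, by omega, ?_⟩
  · have hcount' : minusCount N c = minusCount N b := by
      rw [minusCount_eq_sum, minusCount_eq_sum]
      omega
    rwa [BspPlus, hcount']
  · rw [← hc, Function.update_of_ne (Fin.ne_of_val_ne (by dsimp only; omega)),
      Function.update_of_ne (Fin.ne_of_val_ne (by dsimp only; omega))]
    exact h0
  · rw [minusWeight, minusWeight]
    omega
  · subst hc
    rw [eD_of_lt hiN _ (by simp [hij]) (by simp)]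
    exact congrArg some (Function.update_update_update_update_of_eq hij hbi hbj)

theorem exists_raisesTo_of_last_minus_minus (hN : 3 ≤ N) {b : Seq N} (hb : BspPlus N b)
    (h0 : b ⟨0, by omega⟩ = false) (hbi : b ⟨N - 2, by omega⟩ = false)
    (hbj : b ⟨N - 1, by omega⟩ = false) :
    ∃ c, (BspPlus N c ∧ c ⟨0, by omega⟩ = false) ∧ minusWeight N c < minusWeight N b ∧
      RaisesTo N c b := by
  have hij : (⟨N - 2, by omega⟩ : Fin N) ≠ ⟨N - 1, by omega⟩ := by simp; omega
  have hcount :=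
    Fintype.sum_update_update_add hij (fun _ s => if s = false then 1 else 0) b true true
  have hweight :=
    Fintype.sum_update_update_add hij (fun k s => if s = false then N - k else 0) b true true
  simp only [hbi, hbj, ↓reduceIte, Bool.true_eq_false] at hcount hweight
  generalize hc : Function.update (Function.update b ⟨N - 2, _⟩ true) ⟨N - 1, _⟩ true = c
    at hcount hweight
  refine ⟨c, ⟨?_, ?_⟩, ?_, N, by omega, le_rfl, ?_⟩
  · have hcount' : minusCount N b = minusCount N c + 2 := by
      rw [minusCount_eq_sum, minusCount_eq_sum]
      omega
    rw [BspPlus, hcount', Nat.even_add] at hb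
    exact hb.mpr even_two
  · rw [← hc, Function.update_of_ne (Fin.ne_of_val_ne (by dsimp only; omega)),
      Function.update_of_ne (Fin.ne_of_val_ne (by dsimp only; omega))]
    exact h0
  · rw [minusWeight, minusWeight]
    omega
  · subst hc
    rw [eD_last (by omega) _ (by simp [hij]) (by simp)]
    exact congrArg some (Function.update_update_update_update_of_eq hij hbi hbj)

theorem exists_interior_minus (hN : 2 ≤ N) {b : Seq N} (hb : BspPlus N b)
    (h0 : b ⟨0, zero_lt_two.trans_le hN⟩ = false) (hne : b ≠ firstLastMinus N) :
    ∃ k, 1 ≤ k ∧ ∃ hk : k + 2 ≤ N, b ⟨k, by omega⟩ = false := by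
  by_contra! hint
  have hmid : ∀ k (hk : k < N), k ≠ 0 → k ≠ N - 1 → b ⟨k, hk⟩ = true := fun k hk h0 h1 =>
    Bool.not_eq_false _ ▸ hint k (by omega) (by omega)
  have hlast : b ⟨N - 1, by omega⟩ = false := by
    by_contra hlast
    have hcount : minusCount N b = 1 := by
      rw [minusCount, Finset.card_eq_one]
      refine ⟨⟨0, zero_lt_two.trans_le hN⟩,
        Finset.eq_singleton_iff_unique_mem.mpr ⟨by simpa using h0, ?_⟩⟩
      rintro ⟨k, hk⟩ hbk
      by_contra hk0
      rcases eq_or_ne k (N - 1) with rfl | hk1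
      · exact hlast (by simpa using hbk)
      · simp [hmid k hk (fun h => hk0 (Fin.ext h)) hk1] at hbk
    exact Nat.not_even_one (hcount ▸ hb)
  apply hne
  funext ⟨k, hk⟩
  rcases eq_or_ne k 0 with rfl | hk0
  · simpa [firstLastMinus] using h0
  rcases eq_or_ne k (N - 1) with rfl | hk1
  · simpa [firstLastMinus] using hlast
  simp only [firstLastMinus, hmid k hk hk0 hk1, Bool.true_eq, decide_eq_true_eq]
  omega

theorem exists_raisesTo_of_ne (hN : 2 ≤ N) {b : Seq N} (hb : BspPlus N b)
    (h0 : b ⟨0, zero_lt_two.trans_le hN⟩ = false) (hne : b ≠ firstLastMinus N) :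
    ∃ c, (BspPlus N c ∧ c ⟨0, zero_lt_two.trans_le hN⟩ = false) ∧
      minusWeight N c < minusWeight N b ∧ RaisesTo N c b := by
  obtain ⟨k, hk1, hkN, hbk⟩ := exists_interior_minus hN hb h0 hne
  rcases Nat.or_exists_not_succ_of_le (p := fun m => ∀ h : m < N, b ⟨m, h⟩ = false)
    (fun _ => hbk) (show k ≤ N - 2 by omega) with hlast | ⟨m, hkm, hmN, hbm, hbm'⟩
  · cases hbl : b ⟨N - 1, by omega⟩
    · exact exists_raisesTo_of_last_minus_minus (by omega) hb h0 (hlast _) hbl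
    · exact exists_raisesTo_of_minus_plus hN hb h0 (i := N - 2) (by omega) (by omega) (hlast _)
        (by convert hbl using 3; omega)
  · simp only [not_forall, Bool.not_eq_false] at hbm'
    obtain ⟨_, hbm'⟩ := hbm'
    exact exists_raisesTo_of_minus_plus hN hb h0 (by omega) (by omega) (hbm _) hbm'

/-- Every `b ∈ B_sp^+` with first entry `−` is reachable from
`(−,+,…,+,−)` (first and last entries `−`, all others `+`) using only the operators
`ẽ_l` with `2 ≤ l ≤ N` (type `D_N`, `N ≥ 2`). -/
theorem BspPlus_first_minus_reachable (N : ℕ) (hN : 2 ≤ N) (b : Seq N)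
    (hb : BspPlus N b) (h1 : b ⟨0, by omega⟩ = false) :
    Relation.ReflTransGen
      (fun x y => ∃ l, 2 ≤ l ∧ l ≤ N ∧ eD N l x = some y)
      (fun i => decide (0 < (i : ℕ) ∧ (i : ℕ) < N - 1)) b :=
  Relation.reflTransGen_of_exists_lt (P := fun c => BspPlus N c ∧ c ⟨0, by omega⟩ = false)
    (minusWeight N) (fun _ hc hne => exists_raisesTo_of_ne hN hc.1 hc.2 hne) ⟨hb, h1⟩

end CrystalPaper
end

section
/- Let N ≥ 2. Equip B_sp^+ × B_sp^− with the tensor-product type-D_N Kashiwara operators. Then every element u ⊗ v of B_sp^+ × B_sp^− lies in the connected component of exactly one of the elements (+,…,+) ⊗ (+^k, −^{N−k}) with 0 ≤ k ≤ N−1 and k ≡ N−1 (mod 2), where (+^k, −^{N−k}) denotes the sign sequence whose first k entries are + and last N−k entries are −. Moreover, these elements are precisely the elements x ⊗ y with f̃_l(x ⊗ y) = 0 for all 1 ≤ l ≤ N. -/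
namespace CrystalPaper

/-- `n`-fold iteration of a partial operator. -/
def iterOp {σ : Type*} (f : σ → Option σ) : ℕ → σ → Option σ
  | 0, x => some x
  | n + 1, x => (f x).bind (iterOp f n)

/-- `max {n ≥ 0 : f^n x ≠ 0}`, as a supremum in `ℕ`.  Used for the string
lengths `ε_l(x) = max{n : ẽ_l^n x ≠ 0}` and `φ_l(x) = max{n : f̃_l^n x ≠ 0}`. -/
noncomputable def opMax {σ : Type*} (f : σ → Option σ) (x : σ) : ℕ :=
  sSup {n | iterOp f n x ≠ none}

/-- The tensor-product raising operator `ẽ_l` on pairs (lowest-weight convention):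
`ẽ_l(x ⊗ y) = x ⊗ ẽ_l y` if `ε_l(x) ≤ φ_l(y)`, and `ẽ_l x ⊗ y` otherwise. -/
noncomputable def teD (N l : ℕ) (p : Seq N × Seq N) : Option (Seq N × Seq N) :=
  if opMax (eD N l) p.1 ≤ opMax (fD N l) p.2 then (eD N l p.2).map fun y => (p.1, y)
  else (eD N l p.1).map fun x => (x, p.2)

/-- The tensor-product lowering operator `f̃_l` on pairs (lowest-weight convention):
`f̃_l(x ⊗ y) = x ⊗ f̃_l y` if `ε_l(x) < φ_l(y)`, and `f̃_l x ⊗ y` otherwise. -/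
noncomputable def tfD (N l : ℕ) (p : Seq N × Seq N) : Option (Seq N × Seq N) :=
  if opMax (eD N l) p.1 < opMax (fD N l) p.2 then (fD N l p.2).map fun y => (p.1, y)
  else (fD N l p.1).map fun x => (x, p.2)

/-- Connectedness in the tensor product of two type-`D_N` spin crystals:
the equivalence relation generated by single applications of the operators
`ẽ_l`, `f̃_l` with `1 ≤ l ≤ N`. -/
def ConnD (N : ℕ) (p q : Seq N × Seq N) : Prop :=
  Relation.EqvGen (fun p q => ∃ l, 1 ≤ l ∧ l ≤ N ∧ (teD N l p = some q ∨ tfD N l p = some q)) p q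

/-!
All `ẽ_l`- and `f̃_l`-strings have length at most one, so the tensor rule simplifies:
`f̃_l (x ⊗ y)` acts on `y` iff `ε_l(x) = 0` and `φ_l(y) = 1`. In particular `ẽ_l` and `f̃_l`
remain mutually inverse on pairs, and components are generated by `f̃`-steps alone.

Existence. An `f̃`-step lowers the weight `∑ (N - i)` over the `−` entries and keeps the parity of
each factor, so iterating ends at a pair `x ⊗ y` killed by every `f̃_l`. Then `x` has no `(−,+)`
and no final `(−,−)` and an even number of `−`, so `x = (+,…,+)`; hence `y` has no `(−,+)` and is
some `(+^k, −^{N−k})`.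

Uniqueness. Read `u ⊗ v` as the word `c_i = [u_i = +] - [v_i = +] ∈ {-1, 0, 1}` and let `M` be
its largest prefix sum. An `f̃_l` with `l < N` swaps two adjacent letters, creating or destroying
no peak, so `M` is unchanged. `f̃_N` only changes the last two letters; as the total sum is odd,
`M` moves at most from an even value to the next odd one, so `⌊M / 2⌋` is invariant. For
`(+,…,+) ⊗ (+^k, −^{N−k})` one has `M = N - k`, and these values differ in `⌊· / 2⌋` for `k` of
fixed parity.
-/

open Finset Function

theorem _root_.Relation.EqvGen.apply_eq_of_invariant {α β : Type*} {r : α → α → Prop}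
    {P : α → Prop} {g : α → β} (hP : ∀ a b, r a b → (P a ↔ P b))
    (hg : ∀ a b, r a b → P a → g a = g b) {a b : α} (h : Relation.EqvGen r a b) (ha : P a) :
    g a = g b := by
  suffices ∀ a b, Relation.EqvGen r a b → (P a ↔ P b) ∧ (P a → g a = g b) from
    (this a b h).2 ha
  intro a b h
  induction h with
  | rel x y hxy => exact ⟨hP x y hxy, hg x y hxy⟩
  | refl => simp
  | symm x y _ ih => exact ⟨ih.1.symm, fun hy => (ih.2 (ih.1.mpr hy)).symm⟩
  | trans x y z _ _ ih₁ ih₂ =>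
    exact ⟨ih₁.1.trans ih₂.1, fun hx => (ih₁.2 hx).trans (ih₂.2 (ih₁.1.mp hx))⟩

section ShortStrings

variable {σ : Type*} {e f g : σ → Option σ}

lemma opMax_eq_toNat_isSome (hg : ∀ x y, g x = some y → g y = none) (x : σ) :
    opMax g x = (g x).isSome.toNat := by
  have key : ∀ n, iterOp g n x ≠ none ↔ n ≤ (g x).isSome.toNat := by
    rintro (_ | _ | n) <;> cases hx : g x with
    | none => simp [iterOp, hx]
    | some y => simp [iterOp, hx, hg x y hx]
  simp only [opMax, key]
  exact csSup_Iic

/-- All `e`/`f`-strings have length at most one, so `ε, φ ∈ {0, 1}`. -/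
structure ShortStrings (e f : σ → Option σ) : Prop where
  inverse : ∀ x y, e x = some y ↔ f y = some x
  exclusive : ∀ x, e x = none ∨ f x = none

noncomputable def tensorE (e f : σ → Option σ) (p : σ × σ) : Option (σ × σ) :=
  if opMax e p.1 ≤ opMax f p.2 then (e p.2).map fun y => (p.1, y)
  else (e p.1).map fun x => (x, p.2)

noncomputable def tensorF (e f : σ → Option σ) (p : σ × σ) : Option (σ × σ) :=
  if opMax e p.1 < opMax f p.2 then (f p.2).map fun y => (p.1, y)
  else (f p.1).map fun x => (x, p.2)

namespace ShortStrings

variable (hc : ShortStrings e f)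
include hc

lemma e_eq_none_of_e_eq_some {x y : σ} (h : e x = some y) : e y = none :=
  (hc.exclusive y).resolve_right (by simp [(hc.inverse x y).mp h])

lemma f_eq_none_of_f_eq_some {x y : σ} (h : f x = some y) : f y = none :=
  (hc.exclusive y).resolve_left (by simp [(hc.inverse y x).mpr h])

lemma tensorF_eq (x y : σ) : tensorF e f (x, y) =
    if e x = none ∧ f y ≠ none then (f y).map (x, ·) else (f x).map (·, y) := by
  simp only [tensorF, opMax_eq_toNat_isSome (fun _ _ => hc.e_eq_none_of_e_eq_some),
    opMax_eq_toNat_isSome (fun _ _ => hc.f_eq_none_of_f_eq_some)]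
  cases e x <;> cases f y <;> simp

lemma tensorE_eq (x y : σ) : tensorE e f (x, y) =
    if e x = none ∨ f y ≠ none then (e y).map (x, ·) else (e x).map (·, y) := by
  simp only [tensorE, opMax_eq_toNat_isSome (fun _ _ => hc.e_eq_none_of_e_eq_some),
    opMax_eq_toNat_isSome (fun _ _ => hc.f_eq_none_of_f_eq_some)]
  cases e x <;> cases f y <;> simp

lemma tensorF_eq_some_iff {p q : σ × σ} : tensorF e f p = some q ↔ tensorE e f q = some p := by
  obtain ⟨x, y⟩ := p
  obtain ⟨x', y'⟩ := q
  rw [hc.tensorF_eq, hc.tensorE_eq]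
  have := hc.inverse x' x
  have := hc.inverse y' y
  have := hc.exclusive x
  have := hc.exclusive y
  have := hc.exclusive x'
  have := hc.exclusive y'
  aesop

lemma tensorF_eq_none_iff (x y : σ) :
    tensorF e f (x, y) = none ↔ f x = none ∧ (e x = none → f y = none) := by
  rw [hc.tensorF_eq]
  by_cases hx : e x = none <;> by_cases hy : f y = none <;> simp [hx, hy]

lemma tensorF_eq_some_cases {x y x' y' : σ} (h : tensorF e f (x, y) = some (x', y')) :
    x' = x ∧ f y = some y' ∨ f x = some x' ∧ y' = y := by
  rw [hc.tensorF_eq] at h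
  split_ifs at h <;> simp_all [eq_comm]

lemma tensorF_eq_some_factors {x y x' y' : σ} (h : tensorF e f (x, y) = some (x', y')) :
    (x' = x ∨ f x = some x') ∧ (y' = y ∨ f y = some y') := by
  rcases hc.tensorF_eq_some_cases h with ⟨rfl, hy⟩ | ⟨hx, rfl⟩ <;> simp [*]

lemma fst_eq_none_of_tensorF {x y : σ} {q : σ × σ} (h : tensorF e f (x, y) = some q) :
    e x = none := by
  rw [hc.tensorF_eq] at h
  split_ifs at h with hxy
  · exact hxy.1
  · exact (hc.exclusive x).resolve_right fun hx => by simp [hx] at h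

lemma snd_eq_none_of_tensorE {x y : σ} {q : σ × σ} (h : tensorE e f (x, y) = some q) :
    f y = none := by
  rw [hc.tensorE_eq] at h
  split_ifs at h with hxy
  · exact (hc.exclusive y).resolve_left fun hy => by simp [hy] at h
  · exact not_not.mp (not_or.mp hxy).2

end ShortStrings
end ShortStrings

section RewriteAt

variable {α β M : Type*} [DecidableEq α]

lemma sum_apply_update_add [Fintype α] [AddCommMonoid M] (F : α → β → M) (b : α → β) (i : α)
    (x : β) : ∑ k, F k (update b i x k) + F i (b i) = ∑ k, F k (b k) + F i x := by
  simp_rw [apply_update F b i x, sum_update_of_mem (mem_univ i),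
    sum_eq_add_sum_sdiff_singleton_of_mem (mem_univ i) fun k => F k (b k)]
  abel

variable [DecidableEq β]

def rewriteAt (i j : α) (p q : β × β) (b : α → β) : Option (α → β) :=
  if (b i, b j) = p then some (update (update b i q.1) j q.2) else none

variable {i j k : α} {p q : β × β} {b b' : α → β}

lemma rewriteAt_eq_none_iff : rewriteAt i j p q b = none ↔ (b i, b j) ≠ p := by
  unfold rewriteAt; split_ifs <;> simp_all

lemma rewriteAt_eq_some_iff :
    rewriteAt i j p q b = some b' ↔ (b i, b j) = p ∧ update (update b i q.1) j q.2 = b' := by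
  unfold rewriteAt; split_ifs <;> simp_all

lemma rewriteAt_apply_of_ne (h : rewriteAt i j p q b = some b') (hi : k ≠ i) (hj : k ≠ j) :
    b' k = b k := by
  obtain ⟨-, rfl⟩ := rewriteAt_eq_some_iff.mp h
  simp [update_of_ne hi, update_of_ne hj]

lemma apply_eq_of_eq_or_rewriteAt (h : b' = b ∨ rewriteAt i j p q b = some b') (hi : k ≠ i)
    (hj : k ≠ j) : b' k = b k := by
  rcases h with rfl | h
  · rfl
  · exact rewriteAt_apply_of_ne h hi hj

lemma rewriteAt_window (hij : i ≠ j) (h : rewriteAt i j p q b = some b') :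
    (b i, b j) = p ∧ (b' i, b' j) = q := by
  obtain ⟨hp, rfl⟩ := rewriteAt_eq_some_iff.mp h
  simp [hp, update_of_ne hij]

lemma add_apply_eq_of_eq_or_rewriteAt_swap [AddCommMonoid M] (F : β → M) (hij : i ≠ j)
    (h : b' = b ∨ rewriteAt i j p p.swap b = some b') :
    F (b' i) + F (b' j) = F (b i) + F (b j) := by
  rcases h with rfl | h
  · rfl
  · obtain ⟨hp, hq⟩ := rewriteAt_window hij h
    simp only [Prod.ext_iff, Prod.fst_swap, Prod.snd_swap] at hp hq
    rw [hq.1, hq.2, hp.1, hp.2, add_comm]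

lemma rewriteAt_symm (hij : i ≠ j) (h : rewriteAt i j p q b = some b') :
    rewriteAt i j q p b' = some b := by
  obtain ⟨hp, rfl⟩ := rewriteAt_eq_some_iff.mp h
  refine rewriteAt_eq_some_iff.mpr ⟨by simp [update_of_ne hij], ?_⟩
  ext k
  by_cases hkj : k = j
  · subst hkj; simp [← hp]
  by_cases hki : k = i
  · subst hki; simp [update_of_ne hkj, ← hp]
  · simp [update_of_ne hkj, update_of_ne hki]

lemma shortStrings_rewriteAt (hij : i ≠ j) (hpq : p ≠ q) :
    ShortStrings (rewriteAt i j p q) (rewriteAt i j q p) where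
  inverse _ _ := ⟨rewriteAt_symm hij, rewriteAt_symm hij⟩
  exclusive x := by
    by_contra! h
    simp only [ne_eq, rewriteAt_eq_none_iff, not_not] at h
    exact hpq (h.1.symm.trans h.2)

lemma sum_rewriteAt_add [Fintype α] [AddCommMonoid M] (F : α → β → M) (hij : i ≠ j)
    (h : rewriteAt i j p q b = some b') :
    ∑ k, F k (b' k) + (F i p.1 + F j p.2) = ∑ k, F k (b k) + (F i q.1 + F j q.2) := by
  obtain ⟨hp, rfl⟩ := rewriteAt_eq_some_iff.mp h
  have h₁ := sum_apply_update_add F (update b i q.1) j q.2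
  have h₂ := sum_apply_update_add F b i q.1
  rw [update_of_ne hij.symm] at h₁
  rw [← hp]
  calc _ = (∑ k, F k (update (update b i q.1) j q.2 k) + F j (b j)) + F i (b i) := by abel
    _ = _ := by rw [h₁, add_right_comm, h₂]; abel

end RewriteAt

section SignOperators

variable {N t l : ℕ}

lemma eD_succ (ht : t + 1 < N) :
    eD N (t + 1) = rewriteAt (⟨t, by omega⟩ : Fin N) ⟨t + 1, ht⟩ (true, false) (false, true) := by
  funext b
  simp [eD, rewriteAt, ht]

lemma fD_succ (ht : t + 1 < N) :
    fD N (t + 1) = rewriteAt (⟨t, by omega⟩ : Fin N) ⟨t + 1, ht⟩ (false, true) (true, false) := by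
  funext b
  simp [fD, rewriteAt, ht]

lemma eD_last_s6 :
    eD (t + 2) (t + 2) = rewriteAt (⟨t, by omega⟩ : Fin (t + 2)) ⟨t + 1, by omega⟩ (true, true)
      (false, false) := by
  funext b
  simp [eD, rewriteAt]

lemma fD_last :
    fD (t + 2) (t + 2) = rewriteAt (⟨t, by omega⟩ : Fin (t + 2)) ⟨t + 1, by omega⟩ (false, false)
      (true, true) := by
  funext b
  simp [fD, rewriteAt]

lemma exists_add_one_lt_or_eq_add_two (hl : 1 ≤ l) (hlN : l ≤ N) (hN : 2 ≤ N) :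
    (∃ t, l = t + 1 ∧ t + 1 < N) ∨ ∃ t, l = t + 2 ∧ N = t + 2 := by
  rcases hlN.lt_or_eq with h | h
  · exact .inl ⟨l - 1, by omega, by omega⟩
  · exact .inr ⟨N - 2, by omega, by omega⟩

lemma shortStrings_eD_fD (hl : 1 ≤ l) (hlN : l ≤ N) (hN : 2 ≤ N) :
    ShortStrings (eD N l) (fD N l) := by
  obtain ⟨t, rfl, ht⟩ | ⟨t, rfl, rfl⟩ := exists_add_one_lt_or_eq_add_two hl hlN hN
  · rw [eD_succ ht, fD_succ ht]
    exact shortStrings_rewriteAt (by simp) (by simp)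
  · rw [eD_last_s6, fD_last]
    exact shortStrings_rewriteAt (by simp) (by simp)

lemma minusCount_eq_sum_s6 (b : Seq N) : minusCount N b = ∑ i, (!b i).toNat := by
  rw [minusCount, card_filter]
  congr! with i
  cases b i <;> rfl

lemma even_minusCount_iff_of_fD (hl : 1 ≤ l) (hlN : l ≤ N) (hN : 2 ≤ N) {b b' : Seq N}
    (h : fD N l b = some b') : Even (minusCount N b') ↔ Even (minusCount N b) := by
  simp only [minusCount_eq_sum_s6, Nat.even_iff]
  obtain ⟨t, rfl, ht⟩ | ⟨t, rfl, rfl⟩ := exists_add_one_lt_or_eq_add_two hl hlN hN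
  · rw [fD_succ ht] at h
    have := sum_rewriteAt_add (fun _ c => (!c).toNat) (by simp) h
    simp only [Bool.not_false, Bool.not_true, Bool.toNat_true, Bool.toNat_false] at this
    omega
  · rw [fD_last] at h
    have := sum_rewriteAt_add (fun _ c => (!c).toNat) (by simp) h
    simp only [Bool.not_false, Bool.not_true, Bool.toNat_true, Bool.toNat_false] at this
    omega

def negWeight (N : ℕ) (b : Seq N) : ℕ := ∑ i : Fin N, (!b i).toNat * (N - i)

lemma negWeight_lt_of_fD (hl : 1 ≤ l) (hlN : l ≤ N) (hN : 2 ≤ N) {b b' : Seq N}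
    (h : fD N l b = some b') : negWeight N b' < negWeight N b := by
  obtain ⟨t, rfl, ht⟩ | ⟨t, rfl, rfl⟩ := exists_add_one_lt_or_eq_add_two hl hlN hN
  · rw [fD_succ ht] at h
    have := sum_rewriteAt_add (fun (i : Fin N) c => (!c).toNat * (N - i)) (by simp) h
    simp only [Bool.not_false, Bool.not_true, Bool.toNat_true, Bool.toNat_false] at this
    simp only [negWeight]
    omega
  · rw [fD_last] at h
    have := sum_rewriteAt_add (fun (i : Fin (t + 2)) c => (!c).toNat * (t + 2 - i)) (by simp) h
    simp only [Bool.not_false, Bool.not_true, Bool.toNat_true, Bool.toNat_false] at this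
    simp only [negWeight]
    omega

end SignOperators

section PrefixSums

def prefixSum (s : ℕ → ℤ) (j : ℕ) : ℤ := ∑ i ∈ range j, s i

def prefixMax (s : ℕ → ℤ) (n : ℕ) : ℤ :=
  (range (n + 1)).sup' nonempty_range_add_one (prefixSum s)

variable {s s' : ℕ → ℤ} {n t j : ℕ}

lemma prefixSum_succ (s : ℕ → ℤ) (j : ℕ) : prefixSum s (j + 1) = prefixSum s j + s j :=
  sum_range_succ s j

lemma prefixSum_le_prefixMax (h : j ≤ n) : prefixSum s j ≤ prefixMax s n :=
  le_sup' _ (mem_range.mpr (by omega))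

lemma prefixMax_le_iff {c : ℤ} : prefixMax s n ≤ c ↔ ∀ j ≤ n, prefixSum s j ≤ c := by
  simp [prefixMax]

lemma prefixMax_succ : prefixMax s (n + 1) = max (prefixMax s n) (prefixSum s (n + 1)) := by
  refine le_antisymm (prefixMax_le_iff.mpr fun j hj => ?_)
    (max_le ?_ (prefixSum_le_prefixMax le_rfl))
  · rcases hj.lt_or_eq with hj | rfl
    · exact le_max_of_le_left (prefixSum_le_prefixMax (by omega))
    · exact le_max_right _ _
  · exact prefixMax_le_iff.mpr fun j hj => prefixSum_le_prefixMax (by omega)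

lemma prefixMax_congr (h : ∀ i < n, s i = s' i) : prefixMax s n = prefixMax s' n :=
  sup'_congr _ rfl fun j hj =>
    sum_congr rfl fun i hi => h i (by simp at hi hj; omega)

lemma prefixMax_eq_prefixSum_of_nonneg (h : ∀ i < n, 0 ≤ s i) : prefixMax s n = prefixSum s n :=
  le_antisymm (prefixMax_le_iff.mpr fun _ hj =>
      sum_le_sum_of_subset_of_nonneg (range_subset_range.mpr hj)
        fun i hi _ => h i (mem_range.mp hi))
    (prefixSum_le_prefixMax le_rfl)

lemma prefixSum_eq_of_swap (hoff : ∀ i, i ≠ t → i ≠ t + 1 → s' i = s i)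
    (hsum : s' t + s' (t + 1) = s t + s (t + 1)) (hj : j ≠ t + 1) :
    prefixSum s' j = prefixSum s j := by
  rw [← sub_eq_zero, prefixSum, prefixSum, ← sum_sub_distrib]
  rcases le_or_gt j t with hjt | hjt
  · exact sum_eq_zero fun i hi => by
      rw [hoff i (by simp at hi; omega) (by simp at hi; omega), sub_self]
  · rw [sum_eq_add_of_mem t (t + 1) (by simpa) (by simp; omega) (by omega)
      fun i _ hi => by rw [hoff i hi.1 hi.2, sub_self]]
    linarith

/-- `hpeak` says that the prefix sum at `t + 1` is not a strict local maximum. -/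
lemma prefixMax_le_of_swap (ht : t + 2 ≤ n) (hoff : ∀ i, i ≠ t → i ≠ t + 1 → s' i = s i)
    (hsum : s' t + s' (t + 1) = s t + s (t + 1)) (hpeak : s t ≤ 0 ∨ 0 ≤ s (t + 1)) :
    prefixMax s n ≤ prefixMax s' n := by
  have heq : ∀ j, j ≠ t + 1 → prefixSum s j = prefixSum s' j :=
    fun j hj => (prefixSum_eq_of_swap hoff hsum hj).symm
  refine prefixMax_le_iff.mpr fun j hj => ?_
  by_cases hjt : j = t + 1
  · subst hjt
    calc prefixSum s (t + 1) ≤ max (prefixSum s t) (prefixSum s (t + 2)) := by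
          rw [prefixSum_succ s (t + 1), prefixSum_succ s t]; omega
      _ = max (prefixSum s' t) (prefixSum s' (t + 2)) := by
          rw [heq t (by omega), heq (t + 2) (by omega)]
      _ ≤ prefixMax s' n := max_le (prefixSum_le_prefixMax (by omega)) (prefixSum_le_prefixMax ht)
  · exact (heq j hjt).le.trans (prefixSum_le_prefixMax hj)

lemma prefixMax_eq_of_swap (ht : t + 2 ≤ n) (hoff : ∀ i, i ≠ t → i ≠ t + 1 → s' i = s i)
    (hsum : s' t + s' (t + 1) = s t + s (t + 1)) (hpeak : s t ≤ 0 ∨ 0 ≤ s (t + 1))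
    (hpeak' : s' t ≤ 0 ∨ 0 ≤ s' (t + 1)) : prefixMax s' n = prefixMax s n :=
  le_antisymm (prefixMax_le_of_swap ht (fun i hi hi' => (hoff i hi hi').symm) hsum.symm hpeak')
    (prefixMax_le_of_swap ht hoff hsum hpeak)

/-- By `htail` the last two terms raise the maximum by at most one, and by `hodd` only past an
even prefix sum. -/
lemma prefixMax_add_two_div_two (hodd : Odd (prefixSum s (t + 2)))
    (htail : s t ≤ 0 ∧ s t + s (t + 1) ≤ 0 ∨ s t ≤ 1 ∧ s t + s (t + 1) = 1) :
    prefixMax s (t + 2) / 2 = prefixMax s t / 2 := by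
  have := prefixSum_le_prefixMax (s := s) (le_refl t)
  obtain ⟨m, hm⟩ := hodd
  rw [prefixSum_succ, prefixSum_succ] at hm
  rw [prefixMax_succ, prefixMax_succ, prefixSum_succ s (t + 1), prefixSum_succ s t]
  omega

end PrefixSums

section Charge

variable {N t l : ℕ} {u v u' v' : Seq N}

/-- The letter of `u ⊗ v` at position `i`: `1` for `(+,−)`, `-1` for `(−,+)`, `0` otherwise. -/
def charge (u v : Seq N) (i : ℕ) : ℤ :=
  if h : i < N then ((u ⟨i, h⟩).toNat : ℤ) - (v ⟨i, h⟩).toNat else 0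

lemma charge_of_lt {i : ℕ} (h : i < N) :
    charge u v i = ((u ⟨i, h⟩).toNat : ℤ) - (v ⟨i, h⟩).toNat :=
  dif_pos h

lemma charge_congr_of_window (ht : t + 1 < N) {p q : Bool × Bool}
    (hu : u' = u ∨ rewriteAt (⟨t, by omega⟩ : Fin N) ⟨t + 1, ht⟩ p q u = some u')
    (hv : v' = v ∨ rewriteAt (⟨t, by omega⟩ : Fin N) ⟨t + 1, ht⟩ p q v = some v') {i : ℕ}
    (h₁ : i ≠ t) (h₂ : i ≠ t + 1) : charge u' v' i = charge u v i := by
  unfold charge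
  split_ifs with h
  · rw [apply_eq_of_eq_or_rewriteAt hu (Fin.ne_of_val_ne h₁) (Fin.ne_of_val_ne h₂),
      apply_eq_of_eq_or_rewriteAt hv (Fin.ne_of_val_ne h₁) (Fin.ne_of_val_ne h₂)]
  · rfl

lemma sum_toNat_add_minusCount (b : Seq N) : ∑ i, ((b i).toNat : ℤ) + minusCount N b = N := by
  rw [minusCount_eq_sum_s6]
  push_cast
  rw [← sum_add_distrib]
  simp only [show ∀ c : Bool, (c.toNat : ℤ) + (!c).toNat = 1 by decide, sum_const, card_univ,
    Fintype.card_fin, nsmul_eq_mul, mul_one]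

lemma prefixSum_charge : prefixSum (charge u v) N = minusCount N v - minusCount N u := by
  have hu := sum_toNat_add_minusCount u
  have hv := sum_toNat_add_minusCount v
  rw [prefixSum, ← Fin.sum_univ_eq_sum_range, sum_congr rfl fun i _ => charge_of_lt i.isLt,
    sum_sub_distrib]
  linarith

lemma odd_prefixSum_charge (hu : BspPlus N u) (hv : BspMinus N v) :
    Odd (prefixSum (charge u v) N) := by
  obtain ⟨a, ha⟩ := hu
  obtain ⟨b, hb⟩ := hv
  exact ⟨b - a, by rw [prefixSum_charge, ha, hb]; push_cast; ring⟩

lemma no_peak_of_window (a₁ a₂ b₁ b₂ : Bool)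
    (h : (a₁, a₂) ≠ (true, false) ∨ (b₁, b₂) ≠ (false, true)) :
    (a₁.toNat : ℤ) - b₁.toNat ≤ 0 ∨ 0 ≤ (a₂.toNat : ℤ) - b₂.toNat := by
  revert h; cases a₁ <;> cases a₂ <;> cases b₁ <;> cases b₂ <;> decide

lemma tail_of_window (a₁ a₂ b₁ b₂ : Bool) (hconst : a₁ = a₂ ∨ b₁ = b₂)
    (h : (a₁, a₂) ≠ (true, true) ∨ (b₁, b₂) ≠ (false, false)) :
    (a₁.toNat : ℤ) - b₁.toNat ≤ 0 ∧
        (a₁.toNat : ℤ) - b₁.toNat + ((a₂.toNat : ℤ) - b₂.toNat) ≤ 0 ∨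
      (a₁.toNat : ℤ) - b₁.toNat ≤ 1 ∧
        (a₁.toNat : ℤ) - b₁.toNat + ((a₂.toNat : ℤ) - b₂.toNat) = 1 := by
  revert hconst h; cases a₁ <;> cases a₂ <;> cases b₁ <;> cases b₂ <;> decide

end Charge

section Steps

variable {N t l : ℕ} {u v u' v' : Seq N}

lemma tfD_eq_tensorF : tfD N l = tensorF (eD N l) (fD N l) := rfl

lemma prefixMax_charge_eq_of_tfD_succ (ht : t + 1 < N)
    (h : tfD N (t + 1) (u, v) = some (u', v')) :
    prefixMax (charge u' v') N = prefixMax (charge u v) N := by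
  have hc := shortStrings_eD_fD (N := N) (l := t + 1) (by omega) ht.le (by omega)
  rw [tfD_eq_tensorF] at h
  have hsrc := hc.fst_eq_none_of_tensorF h
  have htgt := hc.snd_eq_none_of_tensorE (hc.tensorF_eq_some_iff.mp h)
  rw [eD_succ ht, rewriteAt_eq_none_iff] at hsrc
  rw [fD_succ ht, rewriteAt_eq_none_iff] at htgt
  have hstep := hc.tensorF_eq_some_factors h
  rw [fD_succ ht] at hstep
  have hij : (⟨t, by omega⟩ : Fin N) ≠ ⟨t + 1, ht⟩ := by simp
  have hu := add_apply_eq_of_eq_or_rewriteAt_swap (fun c : Bool => (c.toNat : ℤ)) hij hstep.1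
  have hv := add_apply_eq_of_eq_or_rewriteAt_swap (fun c : Bool => (c.toNat : ℤ)) hij hstep.2
  apply prefixMax_eq_of_swap (t := t) (by omega)
    fun _ => charge_congr_of_window ht hstep.1 hstep.2
  · simp only [charge_of_lt (by omega : t < N), charge_of_lt ht] at hu hv ⊢
    linarith
  · rw [charge_of_lt (by omega), charge_of_lt ht]
    exact no_peak_of_window _ _ _ _ (.inl hsrc)
  · rw [charge_of_lt (by omega), charge_of_lt ht]
    exact no_peak_of_window _ _ _ _ (.inr htgt)

lemma prefixMax_charge_div_two_eq_of_tfD_last {u v u' v' : Seq (t + 2)}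
    (h : tfD (t + 2) (t + 2) (u, v) = some (u', v')) (hodd : Odd (prefixSum (charge u v) (t + 2)))
    (hodd' : Odd (prefixSum (charge u' v') (t + 2))) :
    prefixMax (charge u' v') (t + 2) / 2 = prefixMax (charge u v) (t + 2) / 2 := by
  have hc := shortStrings_eD_fD (N := t + 2) (l := t + 2) (by omega) le_rfl (by omega)
  rw [tfD_eq_tensorF] at h
  have hsrc := hc.fst_eq_none_of_tensorF h
  have htgt := hc.snd_eq_none_of_tensorE (hc.tensorF_eq_some_iff.mp h)
  rw [eD_last_s6, rewriteAt_eq_none_iff] at hsrc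
  rw [fD_last, rewriteAt_eq_none_iff] at htgt
  have hij : (⟨t, by omega⟩ : Fin (t + 2)) ≠ ⟨t + 1, by omega⟩ := by simp
  have hstep := hc.tensorF_eq_some_cases h
  rw [fD_last] at hstep
  -- `f̃_N` turns `(−,−)` into `(+,+)` in the factor it acts on
  have hconst : (u ⟨t, by omega⟩ = u ⟨t + 1, by omega⟩ ∨ v ⟨t, by omega⟩ = v ⟨t + 1, by omega⟩) ∧
      (u' ⟨t, by omega⟩ = u' ⟨t + 1, by omega⟩ ∨ v' ⟨t, by omega⟩ = v' ⟨t + 1, by omega⟩) := by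
    rcases hstep with ⟨-, hv⟩ | ⟨hu, -⟩
    · obtain ⟨h₁, h₂⟩ := rewriteAt_window hij hv
      simp only [Prod.mk.injEq] at h₁ h₂
      simp [h₁, h₂]
    · obtain ⟨h₁, h₂⟩ := rewriteAt_window hij hu
      simp only [Prod.mk.injEq] at h₁ h₂
      simp [h₁, h₂]
  have hwin := hc.tensorF_eq_some_factors h
  rw [fD_last] at hwin
  rw [prefixMax_add_two_div_two hodd', prefixMax_add_two_div_two hodd, prefixMax_congr
    fun _ _ => charge_congr_of_window (by omega) hwin.1 hwin.2 (by omega) (by omega)]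
  · rw [charge_of_lt (by omega), charge_of_lt (by omega)]
    exact tail_of_window _ _ _ _ hconst.1 (.inl hsrc)
  · rw [charge_of_lt (by omega), charge_of_lt (by omega)]
    exact tail_of_window _ _ _ _ hconst.2 (.inr htgt)

end Steps

section Decomposition

variable {N l : ℕ}

lemma minusCount_top (N : ℕ) : minusCount N (top N) = 0 := by
  simp [minusCount, top]

lemma minusCount_lowSeq (N k : ℕ) : minusCount N (lowSeq N k) = N - k := by
  have := Fin.card_filter_val_lt (n := N) (m := k)
  simp only [minusCount, lowSeq, decide_eq_false_iff_not, filter_not, card_sdiff]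
  simp only [inter_univ, card_univ, Fintype.card_fin]
  omega

lemma lowSeq_self (N : ℕ) : lowSeq N N = top N := by
  funext i
  simp [lowSeq, top]

lemma exists_eq_lowSeq {b : Seq N}
    (h : ∀ t (ht : t + 1 < N), b ⟨t, by omega⟩ = false → b ⟨t + 1, ht⟩ = false) :
    ∃ k ≤ N, b = lowSeq N k := by
  have hprop (i : Fin N) (hi : b i = false) : ∀ d (hd : i + d < N), b ⟨i + d, hd⟩ = false := by
    intro d
    induction d with
    | zero => exact fun _ => hi
    | succ d ih => exact fun hd => h (i + d) hd (ih (by omega))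
  classical
  have hP : ∃ n : ℕ, ∀ i : Fin N, n ≤ i → b i = false := ⟨N, fun i hi => absurd i.isLt (by omega)⟩
  refine ⟨Nat.find hP, Nat.find_min' hP fun i hi => absurd i.isLt (by omega), funext fun i => ?_⟩
  by_cases hi : (i : ℕ) < Nat.find hP
  · simp only [lowSeq, hi, decide_true]
    by_contra hb
    refine Nat.find_min hP hi fun j hj => ?_
    simpa [show (i : ℕ) + (j - i) = j by omega] using
      hprop i (by simpa using hb) (j - i) (by omega)
  · simp only [lowSeq, hi, decide_false]
    exact Nat.find_spec hP i (by omega)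

lemma fD_succ_eq_none_iff {b : Seq N} {t : ℕ} (ht : t + 1 < N) :
    fD N (t + 1) b = none ↔ (b ⟨t, by omega⟩ = false → b ⟨t + 1, ht⟩ = false) := by
  rw [fD_succ ht, rewriteAt_eq_none_iff]
  cases b ⟨t, by omega⟩ <;> cases b ⟨t + 1, ht⟩ <;> simp

lemma eq_top_lowSeq_of_tfD_eq_none (hN : 2 ≤ N) {x y : Seq N} (hx : BspPlus N x)
    (hy : BspMinus N y) (h : ∀ l, 1 ≤ l → l ≤ N → tfD N l (x, y) = none) :
    x = top N ∧ ∃ k, k ≤ N - 1 ∧ k % 2 = (N - 1) % 2 ∧ y = lowSeq N k := by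
  have h' l (hl : 1 ≤ l) (hlN : l ≤ N) :=
    ((shortStrings_eD_fD hl hlN hN).tensorF_eq_none_iff x y).mp (h l hl hlN)
  obtain ⟨p, hp, rfl⟩ :=
    exists_eq_lowSeq fun t ht => (fD_succ_eq_none_iff ht).mp (h' (t + 1) (by omega) ht.le).1
  have hpN : N - 1 ≤ p := by
    obtain ⟨t, rfl⟩ : ∃ t, N = t + 2 := ⟨N - 2, by omega⟩
    have := (h' (t + 2) (by omega) le_rfl).1
    rw [fD_last, rewriteAt_eq_none_iff] at this
    by_contra hp
    exact this (by simp [lowSeq]; omega)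
  obtain rfl : N = p := by
    obtain ⟨m, hm⟩ := hx
    rw [minusCount_lowSeq] at hm
    omega
  refine ⟨lowSeq_self N, ?_⟩
  have htop t (ht : t + 1 < N) : eD N (t + 1) (lowSeq N N) = none := by
    rw [lowSeq_self, eD_succ ht, rewriteAt_eq_none_iff]
    simp [top]
  obtain ⟨k, -, rfl⟩ := exists_eq_lowSeq fun t ht =>
    (fD_succ_eq_none_iff ht).mp ((h' (t + 1) (by omega) ht.le).2 (htop t ht))
  obtain ⟨m, hm⟩ := hy
  rw [minusCount_lowSeq] at hm
  exact ⟨k, by omega, by omega, rfl⟩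

lemma tfD_top_lowSeq (hl : 1 ≤ l) (hlN : l ≤ N) (hN : 2 ≤ N) (k : ℕ) :
    tfD N l (top N, lowSeq N k) = none := by
  rw [tfD_eq_tensorF, (shortStrings_eD_fD hl hlN hN).tensorF_eq_none_iff]
  obtain ⟨t, rfl, ht⟩ | ⟨t, rfl, rfl⟩ := exists_add_one_lt_or_eq_add_two hl hlN hN
  · simp only [fD_succ_eq_none_iff ht]
    simp [top, lowSeq]
    omega
  · simp [eD_last_s6, fD_last, rewriteAt_eq_none_iff, top]

def componentIndex (N : ℕ) (p : Seq N × Seq N) : ℤ := prefixMax (charge p.1 p.2) N / 2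

lemma componentIndex_top_lowSeq (N k : ℕ) :
    componentIndex N (top N, lowSeq N k) = ((N - k : ℕ) : ℤ) / 2 := by
  rw [componentIndex, prefixMax_eq_prefixSum_of_nonneg, prefixSum_charge, minusCount_lowSeq,
    minusCount_top]
  · simp
  · intro i hi
    rw [charge_of_lt hi]
    simp [top, Bool.toNat_le]

lemma bsp_iff_of_tfD (hl : 1 ≤ l) (hlN : l ≤ N) (hN : 2 ≤ N) {u v u' v' : Seq N}
    (h : tfD N l (u, v) = some (u', v')) :
    BspPlus N u' ∧ BspMinus N v' ↔ BspPlus N u ∧ BspMinus N v := by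
  have key {b b' : Seq N} (hb : b' = b ∨ fD N l b = some b') :
      Even (minusCount N b') ↔ Even (minusCount N b) := by
    rcases hb with rfl | hb
    · rfl
    · exact even_minusCount_iff_of_fD hl hlN hN hb
  obtain ⟨hu, hv⟩ := (shortStrings_eD_fD hl hlN hN).tensorF_eq_some_factors h
  simp only [BspPlus, BspMinus, ← Nat.not_even_iff_odd, key hu, key hv]

lemma negWeight_add_lt_of_tfD (hl : 1 ≤ l) (hlN : l ≤ N) (hN : 2 ≤ N) {u v u' v' : Seq N}
    (h : tfD N l (u, v) = some (u', v')) :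
    negWeight N u' + negWeight N v' < negWeight N u + negWeight N v := by
  rcases (shortStrings_eD_fD hl hlN hN).tensorF_eq_some_cases h with ⟨rfl, hv⟩ | ⟨hu, rfl⟩
  · have := negWeight_lt_of_fD hl hlN hN hv
    omega
  · have := negWeight_lt_of_fD hl hlN hN hu
    omega

lemma componentIndex_eq_of_tfD (hl : 1 ≤ l) (hlN : l ≤ N) (hN : 2 ≤ N) {u v u' v' : Seq N}
    (hS : BspPlus N u ∧ BspMinus N v) (h : tfD N l (u, v) = some (u', v')) :
    componentIndex N (u', v') = componentIndex N (u, v) := by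
  have hS' := (bsp_iff_of_tfD hl hlN hN h).mpr hS
  obtain ⟨t, rfl, ht⟩ | ⟨t, rfl, rfl⟩ := exists_add_one_lt_or_eq_add_two hl hlN hN
  · exact congrArg (· / 2) (prefixMax_charge_eq_of_tfD_succ ht h)
  · exact prefixMax_charge_div_two_eq_of_tfD_last h (odd_prefixSum_charge hS.1 hS.2)
      (odd_prefixSum_charge hS'.1 hS'.2)

lemma componentIndex_eq_of_connD (hN : 2 ≤ N) {p q : Seq N × Seq N} (h : ConnD N p q)
    (hp : BspPlus N p.1 ∧ BspMinus N p.2) : componentIndex N p = componentIndex N q := by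
  have hstep a b (hab : ∃ l, 1 ≤ l ∧ l ≤ N ∧ (teD N l a = some b ∨ tfD N l a = some b)) :
      ∃ l, 1 ≤ l ∧ l ≤ N ∧ (tfD N l b = some a ∨ tfD N l a = some b) := by
    obtain ⟨l, hl, hlN, hab | hab⟩ := hab
    · exact ⟨l, hl, hlN, .inl ((shortStrings_eD_fD hl hlN hN).tensorF_eq_some_iff.mpr hab)⟩
    · exact ⟨l, hl, hlN, .inr hab⟩
  refine h.apply_eq_of_invariant (P := fun p => BspPlus N p.1 ∧ BspMinus N p.2)
    (fun ⟨a₁, a₂⟩ ⟨b₁, b₂⟩ hab => ?_) (fun ⟨a₁, a₂⟩ ⟨b₁, b₂⟩ hab ha => ?_) hp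
  · obtain ⟨l, hl, hlN, hba | hab⟩ := hstep _ _ hab
    · exact bsp_iff_of_tfD hl hlN hN hba
    · exact (bsp_iff_of_tfD hl hlN hN hab).symm
  · obtain ⟨l, hl, hlN, hba | hab⟩ := hstep _ _ hab
    · exact componentIndex_eq_of_tfD hl hlN hN ((bsp_iff_of_tfD hl hlN hN hba).mp ha) hba
    · exact (componentIndex_eq_of_tfD hl hlN hN ha hab).symm

lemma exists_connD_top_lowSeq (hN : 2 ≤ N) {u v : Seq N} (hu : BspPlus N u) (hv : BspMinus N v) :
    ∃ k, k ≤ N - 1 ∧ k % 2 = (N - 1) % 2 ∧ ConnD N (u, v) (top N, lowSeq N k) := by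
  induction hw : negWeight N u + negWeight N v using Nat.strong_induction_on generalizing u v with
  | _ n ih =>
    by_cases h : ∀ l, 1 ≤ l → l ≤ N → tfD N l (u, v) = none
    · obtain ⟨rfl, k, hk, hkN, rfl⟩ := eq_top_lowSeq_of_tfD_eq_none hN hu hv h
      exact ⟨k, hk, hkN, .refl _⟩
    · simp only [not_forall] at h
      obtain ⟨l, hl, hlN, hne⟩ := h
      obtain ⟨⟨u', v'⟩, hq⟩ := Option.ne_none_iff_exists'.mp hne
      have hS' := (bsp_iff_of_tfD hl hlN hN hq).mpr ⟨hu, hv⟩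
      obtain ⟨k, hk, hkN, hconn⟩ :=
        ih _ (hw ▸ negWeight_add_lt_of_tfD hl hlN hN hq) hS'.1 hS'.2 rfl
      exact ⟨k, hk, hkN, .trans _ _ _ (.rel _ _ ⟨l, hl, hlN, .inr hq⟩) hconn⟩

end Decomposition

/-- Decomposition of `B_sp^+ ⊗ B_sp^−` (type `D_N`, `N ≥ 2`):
every element lies in the connected component of exactly one of the elements
`(+,…,+) ⊗ (+^k, −^{N−k})` with `0 ≤ k ≤ N−1`, `k ≡ N−1 (mod 2)`, and these elements
are precisely the elements killed by all tensor-product operators `f̃_l`, `1 ≤ l ≤ N`. -/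
theorem BspPlus_tensor_BspMinus_decomposition (N : ℕ) (hN : 2 ≤ N) :
    (∀ u v : Seq N, BspPlus N u → BspMinus N v →
      ∃! k, k ≤ N - 1 ∧ k % 2 = (N - 1) % 2 ∧ ConnD N (u, v) (top N, lowSeq N k)) ∧
    (∀ x y : Seq N, BspPlus N x → BspMinus N y →
      ((∀ l, 1 ≤ l → l ≤ N → tfD N l (x, y) = none) ↔
        (x = top N ∧ ∃ k, k ≤ N - 1 ∧ k % 2 = (N - 1) % 2 ∧ y = lowSeq N k))) := by
  refine ⟨fun u v hu hv => ?_, fun x y hx hy => ⟨eq_top_lowSeq_of_tfD_eq_none hN hx hy, ?_⟩⟩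
  · obtain ⟨k, hk, hkN, hconn⟩ := exists_connD_top_lowSeq hN hu hv
    refine ⟨k, ⟨hk, hkN, hconn⟩, fun k' ⟨hk', hk'N, hconn'⟩ => ?_⟩
    have hlow : BspPlus N (top N) ∧ BspMinus N (lowSeq N k) := by
      rw [BspPlus, BspMinus, minusCount_top, minusCount_lowSeq, Nat.odd_iff]
      exact ⟨⟨0, rfl⟩, by omega⟩
    have := componentIndex_eq_of_connD hN (.trans _ _ _ (.symm _ _ hconn) hconn') hlow
    rw [componentIndex_top_lowSeq, componentIndex_top_lowSeq] at this
    omega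
  · rintro ⟨rfl, k, -, -, rfl⟩ l hl hlN
    exact tfD_top_lowSeq hl hlN hN k

end CrystalPaper
end
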